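/- Let q : (0,∞) → ℝ be measurable with p_*·1_{{s>s_*}} ≤ q(s) ≤ p_∞ for constants p_*, p_∞, s_* > 0, let n₀ ∈ L¹(0,∞) be nonnegative with g := ∫₀^∞ n₀(s) ds, and let n be the mild solution of the linear renewal equation with rate q and initial datum n₀, with activity N(t) := ∫₀^∞ q(s) n(t,s) ds. Then N(t) ≥ p_*·e^{−p_∞ t}·g for every t > s_*. -/

import Mathlib

/-!
Split `N(t) = ∫₀ᵗ q n(t,·) + ∫ₜ^∞ q n(t,·)`. On `(0,t)` the density is renewed from the activity,
`q(u) n(t,u) = q(u) e^{-∫₀ᵘ q} N(t-u)` with a weight in `[0, p_∞]`, so the first piece is at least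
`-p_∞ ∫₀ᵗ N⁻`. On `(t,∞)` the initial datum is transported with damping at least `e^{-p_∞ t}`,
so the second piece is nonnegative, and at least `p_* e^{-p_∞ t} g` once `t > s_*`.
Hence `N⁻(t) ≤ p_∞ ∫₀ᵗ N⁻`, Grönwall's lemma gives `N ≥ 0`, and the bound follows.
-/

open MeasureTheory Set Real Filter

/-- Mild solution of the linear renewal equation
`∂ₜn + ∂ₛn + q(s) n = 0`, `n(t,0) = N(t) = ∫₀^∞ q(u) n(t,u) du`, with initial datum `n₀`,
viewed as a continuous bounded map `[0,∞) → L¹(0,∞)`. -/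
def IsRenewalMild (q : ℝ → ℝ) (n₀ : ℝ → ℝ) (n : ℝ → ℝ → ℝ) : Prop :=
  (∀ t ≥ (0:ℝ), IntegrableOn (n t) (Ioi 0)) ∧
  (∃ C : ℝ, ∀ t ≥ (0:ℝ), (∫ s in Ioi (0:ℝ), |n t s|) ≤ C) ∧
  (∀ t₀ ≥ (0:ℝ), Tendsto (fun t => ∫ s in Ioi (0:ℝ), |n t s - n t₀ s|)
    (nhdsWithin t₀ (Ici 0)) (nhds 0)) ∧
  ((n 0) =ᵐ[volume.restrict (Ioi 0)] n₀) ∧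
  (∀ t > (0:ℝ),
    (∀ᵐ s ∂(volume.restrict (Ioi t)),
      n t s = n₀ (s - t) * Real.exp (-(∫ τ in (0:ℝ)..t, q (τ + s - t)))) ∧
    (∀ᵐ s ∂(volume.restrict (Ioo 0 t)),
      n t s = (∫ u in Ioi (0:ℝ), q u * n (t - s) u) * Real.exp (-(∫ τ in (0:ℝ)..s, q τ))))

theorem eq_zero_of_le_mul_integral {f : ℝ → ℝ} {a K : ℝ} (hf : ContinuousOn f (Ici a))
    (hf_nonneg : ∀ t ≥ a, 0 ≤ f t) (hf_le : ∀ t ≥ a, f t ≤ K * ∫ r in a..t, f r) :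
    ∀ t ≥ a, f t = 0 := by
  intro t ht
  set F : ℝ → ℝ := fun x => ∫ r in a..x, f r
  have hF_nonneg : ∀ x ≥ a, 0 ≤ F x := fun x hx =>
    intervalIntegral.integral_nonneg hx fun r hr => hf_nonneg r hr.1
  have hF_deriv : ∀ x ∈ Ico a t, HasDerivWithinAt F (f x) (Ici x) x := fun x hx =>
    intervalIntegral.integral_hasDerivWithinAt_right
      ((hf.mono (uIcc_of_le hx.1 ▸ Icc_subset_Ici_self)).intervalIntegrable)
      ((hf.mono (Ioi_subset_Ici hx.1)).stronglyMeasurableAtFilter_nhdsWithin measurableSet_Ioi x)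
      ((hf x hx.1).mono (Ioi_subset_Ici hx.1))
  have hF_cont : ContinuousOn F (Icc a t) := by
    rw [← uIcc_of_le ht]
    refine intervalIntegral.continuousOn_primitive_interval ?_
    rw [uIcc_of_le ht]
    exact (hf.mono Icc_subset_Ici_self).integrableOn_Icc
  have hF_zero : ∀ x ∈ Icc a t, F x = 0 :=
    eq_zero_of_abs_deriv_le_mul_abs_self_of_eq_zero_right hF_cont hF_deriv
      intervalIntegral.integral_same fun x hx => by
        rw [Real.norm_of_nonneg (hf_nonneg x hx.1), Real.norm_of_nonneg (hF_nonneg x hx.1)]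
        exact hf_le x hx.1
  refine le_antisymm ?_ (hf_nonneg t ht)
  calc f t ≤ K * F t := hf_le t ht
    _ = 0 := by rw [hF_zero t ⟨ht, le_rfl⟩, mul_zero]

theorem measurePreserving_sub_right_restrict_Ioi (t : ℝ) :
    MeasurePreserving (fun u : ℝ => u - t) (volume.restrict (Ioi t)) (volume.restrict (Ioi 0)) := by
  have h := (measurePreserving_sub_right volume t).restrict_preimage measurableSet_Ioi (s := Ioi 0)
  rwa [show (fun u : ℝ => u - t) ⁻¹' Ioi 0 = Ioi t by ext u; simp] at h

theorem neg_mul_negPart_le_mul {a p : ℝ} (ha : 0 ≤ a) (hap : a ≤ p) (x : ℝ) :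
    -(p * x⁻) ≤ a * x := by
  nlinarith [neg_le_negPart x, negPart_nonneg x]

theorem ContinuousOn.negPart {α β : Type*} [TopologicalSpace α] [TopologicalSpace β] [Lattice β]
    [SubNegMonoid β] [ContinuousNeg β] [ContinuousSup β] {f : α → β} {s : Set α}
    (hf : ContinuousOn f s) : ContinuousOn (fun x => (f x)⁻) s := by
  simp only [negPart_def]
  exact hf.neg.sup continuousOn_const

theorem abs_setIntegral_mul_le {q f : ℝ → ℝ} {p : ℝ} {s : Set ℝ} (hq : ∀ x, |q x| ≤ p)
    (hf : IntegrableOn f s) : |∫ u in s, q u * f u| ≤ p * ∫ u in s, |f u| := by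
  rw [← integral_const_mul, ← Real.norm_eq_abs]
  refine norm_integral_le_of_norm_le (hf.abs.const_mul p) (ae_of_all _ fun u => ?_)
  rw [norm_mul, Real.norm_eq_abs, Real.norm_eq_abs]
  exact mul_le_mul_of_nonneg_right (hq u) (abs_nonneg _)

noncomputable def renewalActivity (q : ℝ → ℝ) (n : ℝ → ℝ → ℝ) (t : ℝ) : ℝ :=
  ∫ u in Ioi (0:ℝ), q u * n t u

namespace IsRenewalMild

variable {q n₀ : ℝ → ℝ} {n : ℝ → ℝ → ℝ} {p : ℝ}

theorem integrableOn_mul (hn : IsRenewalMild q n₀ n) (hq_meas : Measurable q)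
    (hq : ∀ x, |q x| ≤ p) {t : ℝ} (ht : 0 ≤ t) : IntegrableOn (fun u => q u * n t u) (Ioi 0) :=
  (hn.1 t ht).bdd_mul hq_meas.aestronglyMeasurable (ae_of_all _ hq)

theorem continuousOn_renewalActivity (hn : IsRenewalMild q n₀ n) (hq_meas : Measurable q)
    (hq : ∀ x, |q x| ≤ p) : ContinuousOn (renewalActivity q n) (Ici 0) := by
  intro t₀ ht₀
  rw [ContinuousWithinAt, tendsto_iff_dist_tendsto_zero]
  have hbound := (hn.2.2.1 t₀ ht₀).const_mul p
  rw [mul_zero] at hbound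
  refine squeeze_zero' (Eventually.of_forall fun _ => dist_nonneg) ?_ hbound
  filter_upwards [self_mem_nhdsWithin] with t ht
  rw [Real.dist_eq, renewalActivity, renewalActivity,
    ← integral_sub (hn.integrableOn_mul hq_meas hq ht) (hn.integrableOn_mul hq_meas hq ht₀)]
  simp_rw [← mul_sub]
  exact abs_setIntegral_mul_le hq ((hn.1 t ht).sub (hn.1 t₀ ht₀))

theorem renewalActivity_zero_nonneg (hn : IsRenewalMild q n₀ n) (hq_nonneg : ∀ x, 0 ≤ q x)
    (hn₀_nonneg : ∀ᵐ s ∂(volume.restrict (Ioi (0:ℝ))), 0 ≤ n₀ s) :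
    0 ≤ renewalActivity q n 0 :=
  integral_nonneg_of_ae <| by
    filter_upwards [hn.2.2.2.1, hn₀_nonneg] with u hu hu₀
    rw [hu]
    exact mul_nonneg (hq_nonneg u) hu₀

theorem neg_integral_negPart_le_setIntegral_Ioc (hn : IsRenewalMild q n₀ n)
    (hq_meas : Measurable q) (hq_nonneg : ∀ x, 0 ≤ q x) (hq_le : ∀ x, q x ≤ p)
    {t : ℝ} (ht : 0 < t) :
    -(p * ∫ r in (0:ℝ)..t, (renewalActivity q n r)⁻) ≤ ∫ u in Ioc 0 t, q u * n t u := by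
  have hq : ∀ x, |q x| ≤ p := fun x => (abs_of_nonneg (hq_nonneg x)).trans_le (hq_le x)
  have hN_cont : ContinuousOn (fun u => (renewalActivity q n (t - u))⁻) (Icc 0 t) :=
    (hn.continuousOn_renewalActivity hq_meas hq).negPart.comp (by fun_prop)
      fun u hu => sub_nonneg.2 hu.2
  have hchange : ∫ r in (0:ℝ)..t, (renewalActivity q n r)⁻
      = ∫ u in Ioc 0 t, (renewalActivity q n (t - u))⁻ := by
    rw [← intervalIntegral.integral_of_le ht.le, intervalIntegral.integral_comp_sub_left
      (fun r => (renewalActivity q n r)⁻) t, sub_self, sub_zero]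
  rw [hchange, ← integral_const_mul, ← integral_neg]
  refine integral_mono_ae ((hN_cont.integrableOn_Icc.mono_set Ioc_subset_Icc_self).const_mul p).neg
    ((hn.integrableOn_mul hq_meas hq ht.le).mono_set Ioc_subset_Ioi_self) ?_
  rw [Measure.restrict_congr_set Ioo_ae_eq_Ioc.symm]
  filter_upwards [(hn.2.2.2.2 t ht).2, ae_restrict_mem measurableSet_Ioo] with u hu hu_mem
  have hexp_le : exp (-(∫ τ in (0:ℝ)..u, q τ)) ≤ 1 :=
    exp_le_one_iff.2 <| neg_nonpos.2 <|
      intervalIntegral.integral_nonneg hu_mem.1.le fun x _ => hq_nonneg x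
  rw [show q u * n t u = (q u * exp (-(∫ τ in (0:ℝ)..u, q τ))) * renewalActivity q n (t - u) by
    rw [hu, renewalActivity]; ring]
  refine neg_mul_negPart_le_mul (mul_nonneg (hq_nonneg u) (exp_pos _).le) ?_ _
  simpa using mul_le_mul (hq_le u) hexp_le (exp_pos _).le ((hq_nonneg 0).trans (hq_le 0))

theorem mul_exp_mul_integral_le_setIntegral_Ioi (hn : IsRenewalMild q n₀ n)
    (hq_meas : Measurable q) (hq : ∀ x, |q x| ≤ p) (hn₀_int : IntegrableOn n₀ (Ioi 0))
    (hn₀_nonneg : ∀ᵐ s ∂(volume.restrict (Ioi (0:ℝ))), 0 ≤ n₀ s) {t c : ℝ} (ht : 0 < t)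
    (hc : 0 ≤ c) (hcq : ∀ u, t < u → c ≤ q u) :
    c * exp (-(p * t)) * ∫ s in Ioi 0, n₀ s ≤ ∫ u in Ioi t, q u * n t u := by
  have hmp := measurePreserving_sub_right_restrict_Ioi t
  have hemb := (MeasurableEquiv.subRight t).measurableEmbedding
  have hexp : ∀ u, exp (-(p * t)) ≤ exp (-(∫ τ in (0:ℝ)..t, q (τ + u - t))) := fun u => by
    gcongr
    calc ∫ τ in (0:ℝ)..t, q (τ + u - t) ≤ |∫ τ in (0:ℝ)..t, q (τ + u - t)| := le_abs_self _
      _ ≤ p * |t - 0| := by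
        rw [← Real.norm_eq_abs]
        exact intervalIntegral.norm_integral_le_of_norm_le_const fun τ _ => hq _
      _ = p * t := by rw [sub_zero, abs_of_pos ht]
  rw [← hmp.integral_comp hemb, ← integral_const_mul]
  refine integral_mono_ae (((hmp.integrable_comp_emb hemb).2 hn₀_int).const_mul _)
    ((hn.integrableOn_mul hq_meas hq ht.le).mono_set (Ioi_subset_Ioi ht.le)) ?_
  filter_upwards [(hn.2.2.2.2 t ht).1, hmp.quasiMeasurePreserving.ae hn₀_nonneg,
    ae_restrict_mem measurableSet_Ioi] with u hu hu₀ hu_mem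
  rw [hu]
  calc c * exp (-(p * t)) * n₀ (u - t) = c * (n₀ (u - t) * exp (-(p * t))) := by ring
    _ ≤ q u * (n₀ (u - t) * exp (-(∫ τ in (0:ℝ)..t, q (τ + u - t)))) :=
      mul_le_mul (hcq u hu_mem) (mul_le_mul_of_nonneg_left (hexp u) hu₀) (by positivity)
        (hc.trans (hcq u hu_mem))

theorem le_renewalActivity (hn : IsRenewalMild q n₀ n) (hq_meas : Measurable q)
    (hq_nonneg : ∀ x, 0 ≤ q x) (hq_le : ∀ x, q x ≤ p) (hn₀_int : IntegrableOn n₀ (Ioi 0))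
    (hn₀_nonneg : ∀ᵐ s ∂(volume.restrict (Ioi (0:ℝ))), 0 ≤ n₀ s) {t c : ℝ} (ht : 0 < t)
    (hc : 0 ≤ c) (hcq : ∀ u, t < u → c ≤ q u) :
    c * exp (-(p * t)) * (∫ s in Ioi 0, n₀ s) - p * ∫ r in (0:ℝ)..t, (renewalActivity q n r)⁻
      ≤ renewalActivity q n t := by
  have hq : ∀ x, |q x| ≤ p := fun x => (abs_of_nonneg (hq_nonneg x)).trans_le (hq_le x)
  have hint := hn.integrableOn_mul hq_meas hq ht.le
  have hsplit : renewalActivity q n t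
      = (∫ u in Ioc 0 t, q u * n t u) + ∫ u in Ioi t, q u * n t u := by
    rw [← setIntegral_union (Ioc_disjoint_Ioi le_rfl) measurableSet_Ioi
      (hint.mono_set Ioc_subset_Ioi_self) (hint.mono_set (Ioi_subset_Ioi ht.le)),
      Ioc_union_Ioi_eq_Ioi ht.le, renewalActivity]
  linarith [hn.neg_integral_negPart_le_setIntegral_Ioc hq_meas hq_nonneg hq_le ht,
    hn.mul_exp_mul_integral_le_setIntegral_Ioi hq_meas hq hn₀_int hn₀_nonneg ht hc hcq]

theorem renewalActivity_nonneg (hn : IsRenewalMild q n₀ n) (hq_meas : Measurable q)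
    (hq_nonneg : ∀ x, 0 ≤ q x) (hq_le : ∀ x, q x ≤ p) (hn₀_int : IntegrableOn n₀ (Ioi 0))
    (hn₀_nonneg : ∀ᵐ s ∂(volume.restrict (Ioi (0:ℝ))), 0 ≤ n₀ s) {t : ℝ} (ht : 0 ≤ t) :
    0 ≤ renewalActivity q n t := by
  have hq : ∀ x, |q x| ≤ p := fun x => (abs_of_nonneg (hq_nonneg x)).trans_le (hq_le x)
  have hp : 0 ≤ p := (hq_nonneg 0).trans (hq_le 0)
  have hgronwall : ∀ t ≥ (0:ℝ),
      (renewalActivity q n t)⁻ ≤ p * ∫ r in (0:ℝ)..t, (renewalActivity q n r)⁻ := by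
    intro t ht
    rw [negPart_def]
    refine max_le ?_ <| mul_nonneg hp <|
      intervalIntegral.integral_nonneg ht fun r _ => negPart_nonneg _
    rcases ht.eq_or_lt with rfl | ht
    · simpa using hn.renewalActivity_zero_nonneg hq_nonneg hn₀_nonneg
    · have h := hn.le_renewalActivity hq_meas hq_nonneg hq_le hn₀_int hn₀_nonneg ht le_rfl
        fun u _ => hq_nonneg u
      rw [zero_mul, zero_mul, zero_sub] at h
      exact neg_le.1 h
  exact negPart_eq_zero.1 <| eq_zero_of_le_mul_integral
    (hn.continuousOn_renewalActivity hq_meas hq).negPart (fun t _ => negPart_nonneg _)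
    hgronwall t ht

end IsRenewalMild

theorem statement13_general
    (q : ℝ → ℝ) (pstar pinf sstar : ℝ)
    (hpstar : 0 < pstar) (hsstar : 0 < sstar)
    (hq_meas : Measurable q)
    (hq_nonneg : ∀ s : ℝ, 0 ≤ q s)
    (hq_lower : ∀ s : ℝ, sstar < s → pstar ≤ q s)
    (hq_upper : ∀ s : ℝ, q s ≤ pinf)
    (n₀ : ℝ → ℝ) (hn₀_int : IntegrableOn n₀ (Ioi 0))
    (hn₀_nonneg : ∀ᵐ s ∂(volume.restrict (Ioi (0:ℝ))), 0 ≤ n₀ s)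
    (g : ℝ) (hg : g = ∫ s in Ioi (0:ℝ), n₀ s)
    (n : ℝ → ℝ → ℝ) (hn : IsRenewalMild q n₀ n)
    :
    ∀ t > sstar, pstar * Real.exp (-(pinf * t)) * g ≤ ∫ u in Ioi (0:ℝ), q u * n t u := by
  intro t ht
  have ht₀ : 0 < t := hsstar.trans ht
  have hnegPart_zero : ∫ r in (0:ℝ)..t, (renewalActivity q n r)⁻ = 0 :=
    intervalIntegral.integral_zero_ae <| ae_of_all _ fun r hr => negPart_eq_zero.2 <|
      hn.renewalActivity_nonneg hq_meas hq_nonneg hq_upper hn₀_int hn₀_nonneg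
        (uIoc_of_le ht₀.le ▸ hr).1.le
  have h := hn.le_renewalActivity hq_meas hq_nonneg hq_upper hn₀_int hn₀_nonneg ht₀ hpstar.le
    fun u hu => hq_lower u (ht.trans hu)
  rwa [hnegPart_zero, mul_zero, sub_zero, ← hg] at h

/-- Lower bound on the activity of the renewal semigroup:
`N(t) ≥ p_* e^{-p_∞ t} g` for all `t > s_*`. -/
theorem statement13
    (q : ℝ → ℝ) (pstar pinf sstar : ℝ)
    (hpstar : 0 < pstar) (hpinf : 0 < pinf) (hsstar : 0 < sstar)
    (hq_meas : Measurable q)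
    (hq_nonneg : ∀ s : ℝ, 0 ≤ q s)
    (hq_lower : ∀ s : ℝ, sstar < s → pstar ≤ q s)
    (hq_upper : ∀ s : ℝ, q s ≤ pinf)
    (n₀ : ℝ → ℝ) (hn₀_int : IntegrableOn n₀ (Ioi 0))
    (hn₀_nonneg : ∀ᵐ s ∂(volume.restrict (Ioi (0:ℝ))), 0 ≤ n₀ s)
    (g : ℝ) (hg : g = ∫ s in Ioi (0:ℝ), n₀ s)
    (n : ℝ → ℝ → ℝ) (hn : IsRenewalMild q n₀ n)
    :
    ∀ t > sstar, pstar * Real.exp (-(pinf * t)) * g ≤ ∫ u in Ioi (0:ℝ), q u * n t u :=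
  statement13_general q pstar pinf sstar hpstar hsstar hq_meas hq_nonneg hq_lower hq_upper n₀
    hn₀_int hn₀_nonneg g hg n hn
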